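/- arXiv:2309.06040 — 9 statements merged into one kernel-verified Lean document; each statement's English description precedes it below -/
import Mathlib

section
/- Let (Λ_t)_{t≥0} be a one-parameter family of positive unital linear maps on d×d complex matrices satisfying the semigroup law Λ_{s+t} = Λ_s ∘ Λ_t for all s, t ≥ 0. Let E and F be finite-outcome observables on ℂ^d. If the observables Λ_{t₁}∘E and Λ_{t₁}∘F are jointly measurable for some t₁ ≥ 0, then Λ_{t₂}∘E and Λ_{t₂}∘F are jointly measurable for every t₂ ≥ t₁. -/
/-!
Evolving to the later time `t₂` is evolving to `t₁` and then applying the positive linear map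
`Λ (t₂ - t₁)`; applying that map to a joint observable of the evolved pair at time `t₁` yields a
joint observable at time `t₂`.
-/

open Matrix BigOperators
open scoped ComplexOrder

/-- A finite-outcome observable on `ℂ^d`. -/
def IsObservable {d : ℕ} {Ω : Type*} [Fintype Ω] [Nonempty Ω]
    (E : Ω → Matrix (Fin d) (Fin d) ℂ) : Prop :=
  (∀ i, (E i).PosSemidef) ∧ ∑ i, E i = 1

/-- Joint measurability of two finite-outcome observables. -/
def JointlyMeasurable {d : ℕ} {Ω₁ Ω₂ : Type*} [Fintype Ω₁] [Fintype Ω₂]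
    (E : Ω₁ → Matrix (Fin d) (Fin d) ℂ) (F : Ω₂ → Matrix (Fin d) (Fin d) ℂ) : Prop :=
  ∃ G : Ω₁ × Ω₂ → Matrix (Fin d) (Fin d) ℂ,
    (∀ p, (G p).PosSemidef) ∧ (∀ i, ∑ j, G (i, j) = E i) ∧ (∀ j, ∑ i, G (i, j) = F j)

theorem JointlyMeasurable.map_of_posSemidef {d : ℕ} {Ω₁ Ω₂ : Type*} [Fintype Ω₁] [Fintype Ω₂]
    {E : Ω₁ → Matrix (Fin d) (Fin d) ℂ} {F : Ω₂ → Matrix (Fin d) (Fin d) ℂ}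
    (h : JointlyMeasurable E F) (Φ : Matrix (Fin d) (Fin d) ℂ →ₗ[ℂ] Matrix (Fin d) (Fin d) ℂ)
    (hΦ : ∀ A : Matrix (Fin d) (Fin d) ℂ, A.PosSemidef → (Φ A).PosSemidef) :
    JointlyMeasurable (fun i => Φ (E i)) (fun j => Φ (F j)) := by
  obtain ⟨G, hG, hGE, hGF⟩ := h
  exact ⟨fun p => Φ (G p), fun p => hΦ _ (hG p),
    fun i => by rw [← map_sum, hGE], fun j => by rw [← map_sum, hGF]⟩

theorem jointMeasurability_markovian_semigroup_general
    {d : ℕ} {Ω₁ Ω₂ : Type*} [Fintype Ω₁] [Fintype Ω₂]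
    (Λ : ℝ → Matrix (Fin d) (Fin d) ℂ →ₗ[ℂ] Matrix (Fin d) (Fin d) ℂ)
    (hΛpos : ∀ t, 0 ≤ t → ∀ A : Matrix (Fin d) (Fin d) ℂ, A.PosSemidef → (Λ t A).PosSemidef)
    (hsemigroup : ∀ s t, 0 ≤ s → 0 ≤ t → Λ (s + t) = (Λ s).comp (Λ t))
    (E : Ω₁ → Matrix (Fin d) (Fin d) ℂ) (F : Ω₂ → Matrix (Fin d) (Fin d) ℂ)
    (t₁ : ℝ) (ht₁ : 0 ≤ t₁)
    (hJM : JointlyMeasurable (fun i => Λ t₁ (E i)) (fun j => Λ t₁ (F j)))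
    (t₂ : ℝ) (ht₂ : t₁ ≤ t₂) :
    JointlyMeasurable (fun i => Λ t₂ (E i)) (fun j => Λ t₂ (F j)) := by
  have hΔ : 0 ≤ t₂ - t₁ := sub_nonneg.mpr ht₂
  have hsplit : ∀ A, Λ t₂ A = Λ (t₂ - t₁) (Λ t₁ A) := fun A => by
    rw [← LinearMap.comp_apply, ← hsemigroup _ _ hΔ ht₁, sub_add_cancel]
  simpa only [hsplit] using hJM.map_of_posSemidef (Λ (t₂ - t₁)) (hΛpos _ hΔ)

/-- for a semigroup of positive unital linear maps, joint measurability of the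
evolved observables at some time `t₁ ≥ 0` persists for all later times `t₂ ≥ t₁`. -/
theorem jointMeasurability_markovian_semigroup
    {d : ℕ} (hd : 1 ≤ d) {Ω₁ Ω₂ : Type*} [Fintype Ω₁] [Fintype Ω₂] [Nonempty Ω₁] [Nonempty Ω₂]
    (Λ : ℝ → Matrix (Fin d) (Fin d) ℂ →ₗ[ℂ] Matrix (Fin d) (Fin d) ℂ)
    (hΛpos : ∀ t, 0 ≤ t → ∀ A : Matrix (Fin d) (Fin d) ℂ, A.PosSemidef → (Λ t A).PosSemidef)
    (hΛunital : ∀ t, 0 ≤ t → Λ t 1 = 1)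
    (hsemigroup : ∀ s t, 0 ≤ s → 0 ≤ t → Λ (s + t) = (Λ s).comp (Λ t))
    (E : Ω₁ → Matrix (Fin d) (Fin d) ℂ) (F : Ω₂ → Matrix (Fin d) (Fin d) ℂ)
    (hE : IsObservable E) (hF : IsObservable F)
    (t₁ : ℝ) (ht₁ : 0 ≤ t₁)
    (hJM : JointlyMeasurable (fun i => Λ t₁ (E i)) (fun j => Λ t₁ (F j)))
    (t₂ : ℝ) (ht₂ : t₁ ≤ t₂) :
    JointlyMeasurable (fun i => Λ t₂ (E i)) (fun j => Λ t₂ (F j)) :=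
  jointMeasurability_markovian_semigroup_general Λ hΛpos hsemigroup E F t₁ ht₁ hJM t₂ ht₂
end

section
/- Let E be a finite-outcome observable on ℂ^d and let F be a finite-outcome observable on ℂ^d all of whose effects F(j) are diagonal matrices. For n, m ∈ Fin d define the coherence coh_{nm}(E) := ∑_i |E(i)_{nm}| and the squared Hellinger distance d²_{nm}(F) := 1 − ∑_j √(F(j)_{nn} · F(j)_{mm}) (the diagonal entries of positive semidefinite matrices being nonnegative reals). If E and F are jointly measurable, then for all n, m: coh_{nm}(E) + d²_{nm}(F) ≤ 1, i.e., ∑_i |E(i)_{nm}| ≤ ∑_j √(F(j)_{nn} · F(j)_{mm}). -/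
open Matrix BigOperators
open scoped ComplexOrder

/-!
Write `E i = ∑ⱼ G(i,j)` and `F j = ∑ᵢ G(i,j)` with all `G(i,j)` positive semidefinite. A positive
semidefinite `M` is a Gram matrix, so Cauchy–Schwarz gives `|Mₙₘ| ≤ √(Mₙₙ Mₘₘ)`, and the triangle
inequality bounds the coherence of `E` by `∑ⱼ ∑ᵢ √(G(i,j)ₙₙ G(i,j)ₘₘ)`. Cauchy–Schwarz again makes
`M ↦ √(Mₙₙ Mₘₘ)` superadditive, so the inner sum is at most `√(F(j)ₙₙ F(j)ₘₘ)`.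
-/

namespace Matrix.PosSemidef

variable {ι 𝕜 : Type*} [RCLike 𝕜]

lemma re_diag_nonneg {M : Matrix ι ι 𝕜} (hM : M.PosSemidef) (i : ι) : 0 ≤ RCLike.re (M i i) :=
  (RCLike.nonneg_iff.mp hM.diag_nonneg).1

lemma norm_apply_le_sqrt [Fintype ι] {M : Matrix ι ι 𝕜} (hM : M.PosSemidef) (i j : ι) :
    ‖M i j‖ ≤ √(RCLike.re (M i i) * RCLike.re (M j j)) := by
  obtain ⟨B, rfl⟩ : ∃ B : Matrix ι ι 𝕜, M = star B * B := by
    classical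
    open scoped MatrixOrder in exact CStarAlgebra.nonneg_iff_eq_star_mul_self.mp hM.nonneg
  have re_diag : ∀ k, RCLike.re ((star B * B) k k) = ∑ l, ‖B l k‖ ^ 2 := fun k => by
    simp only [mul_apply, star_apply, RCLike.star_def, RCLike.conj_mul, map_sum]
    norm_cast
  calc ‖(star B * B) i j‖
      ≤ ∑ l, ‖B l i‖ * ‖B l j‖ := by
        rw [mul_apply]
        exact (norm_sum_le _ _).trans_eq (by simp)
    _ ≤ √(∑ l, ‖B l i‖ ^ 2) * √(∑ l, ‖B l j‖ ^ 2) := Real.sum_mul_le_sqrt_mul_sqrt _ _ _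
    _ = _ := by rw [re_diag, re_diag, Real.sqrt_mul (by positivity)]

lemma sum_sqrt_re_mul_re_le {κ : Type*} [Fintype κ] {G : κ → Matrix ι ι 𝕜}
    (hG : ∀ k, (G k).PosSemidef) (i j : ι) :
    ∑ k, √(RCLike.re (G k i i) * RCLike.re (G k j j)) ≤
      √(RCLike.re ((∑ k, G k) i i) * RCLike.re ((∑ k, G k) j j)) := by
  have hdiag (l : ι) (k : κ) := (hG k).re_diag_nonneg l
  simp only [Matrix.sum_apply, map_sum]
  calc ∑ k, √(RCLike.re (G k i i) * RCLike.re (G k j j))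
      = ∑ k, √(RCLike.re (G k i i)) * √(RCLike.re (G k j j)) := by
        simp only [Real.sqrt_mul (hdiag i _)]
    _ ≤ √(∑ k, RCLike.re (G k i i)) * √(∑ k, RCLike.re (G k j j)) :=
        Real.sum_sqrt_mul_sqrt_le _ (hdiag i) (hdiag j)
    _ = _ := (Real.sqrt_mul (Finset.sum_nonneg fun k _ => hdiag i k) _).symm

end Matrix.PosSemidef

theorem coherence_hellinger_tradeoff_general
    {d : ℕ} {Ω₁ Ω₂ : Type*} [Fintype Ω₁] [Fintype Ω₂]
    (E : Ω₁ → Matrix (Fin d) (Fin d) ℂ) (F : Ω₂ → Matrix (Fin d) (Fin d) ℂ)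
    (hJM : JointlyMeasurable E F) :
    ∀ n m : Fin d,
      ∑ i, ‖E i n m‖ ≤ ∑ j, Real.sqrt ((F j n n).re * (F j m m).re) := by
  intro n m
  obtain ⟨G, hG, hGE, hGF⟩ := hJM
  calc ∑ i, ‖E i n m‖
      ≤ ∑ i, ∑ j, ‖G (i, j) n m‖ := by
        gcongr with i
        rw [← hGE i, Matrix.sum_apply]
        exact norm_sum_le _ _
    _ ≤ ∑ j, ∑ i, √((G (i, j) n n).re * (G (i, j) m m).re) := by
        rw [Finset.sum_comm]
        gcongr with j _ i
        exact (hG (i, j)).norm_apply_le_sqrt n m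
    _ ≤ ∑ j, √((F j n n).re * (F j m m).re) := by
        gcongr with j
        rw [← hGF j]
        exact PosSemidef.sum_sqrt_re_mul_re_le (fun i => hG (i, j)) n m

/-- the coherence–Hellinger-distance tradeoff: if `E` is jointly measurable
with a diagonal observable `F`, then for all `n m`,
`coh_{nm}(E) + d²_{nm}(F) ≤ 1`, i.e. `∑ᵢ |E(i)_{nm}| ≤ ∑ⱼ √(F(j)_{nn} F(j)_{mm})`. -/
theorem coherence_hellinger_tradeoff
    {d : ℕ} (hd : 1 ≤ d) {Ω₁ Ω₂ : Type*} [Fintype Ω₁] [Fintype Ω₂] [Nonempty Ω₁] [Nonempty Ω₂]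
    (E : Ω₁ → Matrix (Fin d) (Fin d) ℂ) (F : Ω₂ → Matrix (Fin d) (Fin d) ℂ)
    (hE : IsObservable E) (hF : IsObservable F)
    (hFdiag : ∀ j, ∀ n m : Fin d, n ≠ m → F j n m = 0)
    (hJM : JointlyMeasurable E F) :
    ∀ n m : Fin d,
      ∑ i, ‖E i n m‖ ≤ ∑ j, Real.sqrt ((F j n n).re * (F j m m).re) :=
  coherence_hellinger_tradeoff_general E F hJM
end

section
/- Let E be a finite-outcome observable on ℂ^d and let F be a finite-outcome observable on ℂ^d all of whose effects F(j) are diagonal matrices. For n, m ∈ Fin d set s_{nm} := ∑_j √(F(j)_{nn} · F(j)_{mm}), and assume s_{nm} > 0 for all n, m. If for every outcome i of E the matrix M(i) with entries M(i)_{nm} = E(i)_{nm} / s_{nm} is positive semidefinite, then E and F are jointly measurable. -/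
open Matrix BigOperators
open scoped ComplexOrder

/-!
With `D j = diag(√F(j)ₙₙ)`, take `G(i, j) = D j * M(i) * D j`, a congruence of the positive
semidefinite `M(i)`. Summing over `j` multiplies the entry `(n, m)` of `M(i)` by
`∑ⱼ √(F(j)ₙₙ F(j)ₘₘ) = sₙₘ`, which gives back `E(i)`. Summing over `i` gives `D j * M' * D j`
with `M'ₙₘ = δₙₘ / sₙₘ`; since `sₙₙ = ∑ⱼ F(j)ₙₙ = 1`, `M' = 1`, and `D j * D j = F(j)` because
`F(j)` is diagonal.
-/

namespace Matrix

variable {n : Type*}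

lemma PosSemidef.re_apply_self_nonneg [Fintype n] {A : Matrix n n ℂ} (hA : A.PosSemidef)
    (k : n) :
    0 ≤ (A k k).re :=
  (Complex.nonneg_iff.mp hA.diag_nonneg).1

/-- For a positive semidefinite diagonal `A` this is `√A`. -/
noncomputable def sqrtDiag [DecidableEq n] (A : Matrix n n ℂ) : Matrix n n ℂ :=
  diagonal fun k => ((A k k).re.sqrt : ℂ)

lemma conjTranspose_sqrtDiag [DecidableEq n] (A : Matrix n n ℂ) :
    (sqrtDiag A)ᴴ = sqrtDiag A := by
  simp [sqrtDiag, diagonal_conjTranspose, Pi.star_def]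

lemma PosSemidef.sqrtDiag_mul_mul_sqrtDiag [Fintype n] [DecidableEq n] {M : Matrix n n ℂ}
    (hM : M.PosSemidef) (A : Matrix n n ℂ) : (sqrtDiag A * M * sqrtDiag A).PosSemidef := by
  simpa only [conjTranspose_sqrtDiag] using hM.mul_mul_conjTranspose_same (sqrtDiag A)

lemma sqrtDiag_mul_mul_sqrtDiag_apply [Fintype n] [DecidableEq n] {A : Matrix n n ℂ}
    (hA : A.PosSemidef) (M : Matrix n n ℂ) (k l : n) :
    (sqrtDiag A * M * sqrtDiag A) k l = ((√((A k k).re * (A l l).re) : ℝ) : ℂ) * M k l := by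
  rw [Real.sqrt_mul (hA.re_apply_self_nonneg k)]
  simp only [sqrtDiag, diagonal_mul, mul_diagonal]
  push_cast
  ring

lemma PosSemidef.sqrtDiag_mul_self [Fintype n] [DecidableEq n] {A : Matrix n n ℂ}
    (hA : A.PosSemidef) (hdiag : A.IsDiag) :
    sqrtDiag A * sqrtDiag A = A := by
  conv_rhs => rw [← hdiag.diagonal_diag]
  rw [sqrtDiag, diagonal_mul_diagonal]
  congr 1
  funext k
  rw [← Complex.ofReal_mul, Real.mul_self_sqrt (hA.re_apply_self_nonneg k)]
  exact hA.isHermitian.coe_re_apply_self k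

lemma sum_of_div_eq_one [DecidableEq n] {ι : Type*} [Fintype ι] {E : ι → Matrix n n ℂ}
    (hE : ∑ i, E i = 1) {s : n → n → ℝ} (hs : ∀ k, s k k = 1) :
    ∑ i, of (fun k l => E i k l / (s k l : ℂ)) = 1 := by
  ext k l
  rw [Matrix.sum_apply]
  simp only [of_apply]
  rw [← Finset.sum_div, ← Matrix.sum_apply, hE]
  by_cases hkl : k = l
  · simp [hkl, hs]
  · simp [one_apply_ne hkl]

end Matrix

lemma IsObservable.sum_sqrt_mul_self_re_apply_self {d : ℕ} {Ω : Type*} [Fintype Ω] [Nonempty Ω]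
    {F : Ω → Matrix (Fin d) (Fin d) ℂ} (hF : IsObservable F) (k : Fin d) :
    ∑ j, √((F j k k).re * (F j k k).re) = 1 := by
  have hsum : ∑ j, F j k k = 1 := by
    simpa [Matrix.sum_apply] using congrFun (congrFun hF.2 k) k
  simp only [Real.sqrt_mul_self ((hF.1 _).re_apply_self_nonneg k), ← Complex.re_sum, hsum,
    Complex.one_re]

theorem jointMeasurability_of_rescaled_posSemidef_general
    {d : ℕ} {Ω₁ Ω₂ : Type*} [Fintype Ω₁] [Fintype Ω₂] [Nonempty Ω₁] [Nonempty Ω₂]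
    (E : Ω₁ → Matrix (Fin d) (Fin d) ℂ) (F : Ω₂ → Matrix (Fin d) (Fin d) ℂ)
    (hE : IsObservable E) (hF : IsObservable F)
    (hFdiag : ∀ j, ∀ n m : Fin d, n ≠ m → F j n m = 0)
    (s : Fin d → Fin d → ℝ)
    (hs : ∀ n m, s n m = ∑ j, Real.sqrt ((F j n n).re * (F j m m).re))
    (hspos : ∀ n m, 0 < s n m)
    (hM : ∀ i, (Matrix.of fun n m => E i n m / (s n m : ℂ)).PosSemidef) :
    JointlyMeasurable E F := by
  set M : Ω₁ → Matrix (Fin d) (Fin d) ℂ := fun i => of fun n m => E i n m / (s n m : ℂ)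
  have hs_diag : ∀ n, s n n = 1 := fun n => (hs n n).trans (hF.sum_sqrt_mul_self_re_apply_self n)
  refine ⟨fun p => sqrtDiag (F p.2) * M p.1 * sqrtDiag (F p.2),
    fun p => (hM p.1).sqrtDiag_mul_mul_sqrtDiag _, fun i => ?_, fun j => ?_⟩
  · ext n m
    have hs_ne : (s n m : ℂ) ≠ 0 := Complex.ofReal_ne_zero.mpr (hspos n m).ne'
    simp only [Matrix.sum_apply, sqrtDiag_mul_mul_sqrtDiag_apply (hF.1 _), ← Finset.sum_mul,
      ← Complex.ofReal_sum, ← hs, M, of_apply]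
    field_simp
  · dsimp only
    rw [← Finset.sum_mul, ← Finset.mul_sum, sum_of_div_eq_one hE.2 hs_diag, mul_one,
      (hF.1 j).sqrtDiag_mul_self (hFdiag j)]

/-- a sufficient condition for joint measurability with a diagonal observable:
if all the rescaled matrices `M(i)_{nm} = E(i)_{nm} / s_{nm}` with
`s_{nm} = ∑ⱼ √(F(j)_{nn} F(j)_{mm}) > 0` are positive semidefinite,
then `E` and `F` are jointly measurable. -/
theorem jointMeasurability_of_rescaled_posSemidef
    {d : ℕ} (hd : 1 ≤ d) {Ω₁ Ω₂ : Type*} [Fintype Ω₁] [Fintype Ω₂] [Nonempty Ω₁] [Nonempty Ω₂]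
    (E : Ω₁ → Matrix (Fin d) (Fin d) ℂ) (F : Ω₂ → Matrix (Fin d) (Fin d) ℂ)
    (hE : IsObservable E) (hF : IsObservable F)
    (hFdiag : ∀ j, ∀ n m : Fin d, n ≠ m → F j n m = 0)
    (s : Fin d → Fin d → ℝ)
    (hs : ∀ n m, s n m = ∑ j, Real.sqrt ((F j n n).re * (F j m m).re))
    (hspos : ∀ n m, 0 < s n m)
    (hM : ∀ i, (Matrix.of fun n m => E i n m / (s n m : ℂ)).PosSemidef) :
    JointlyMeasurable E F :=
  jointMeasurability_of_rescaled_posSemidef_general E F hE hF hFdiag s hs hspos hM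
end

section
/- Let C ∈ Matrix (Fin d) (Fin d) ℂ be positive semidefinite with unit diagonal (C_{nn} = 1 for all n), and let Λ be the associated Schur channel Λ(A) := C ⋆ A, where ⋆ denotes the entrywise (Hadamard/Schur) product. Let F be a finite-outcome observable on ℂ^d all of whose effects F(j) are diagonal matrices. Then the following are equivalent: (i) for every nonempty finite outcome set Ω and every observable E : Ω → Matrix (Fin d) (Fin d) ℂ, the pair (Λ∘E, F) is jointly measurable; (ii) there exists a family (C^{(j)})_{j∈Ω_F} of positive semidefinite matrices indexed by the outcomes of F such that ∑_j C^{(j)} = C and C^{(j)}_{nn} = F(j)_{nn} for all n and j. -/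
open Matrix BigOperators
open scoped ComplexOrder

/-! If `C = ∑ⱼ C⁽ʲ⁾`, then `G(i, j) = C⁽ʲ⁾ ⋆ E(i)` is a joint observable for `(Λ ∘ E, F)`: it is
positive semidefinite by the Schur product theorem, and its `F`-marginal `C⁽ʲ⁾ ⋆ 1` is the diagonal
of `C⁽ʲ⁾`, which is `F(j)` because `F(j)` is diagonal.

Conversely, test against the observable `E(s) = 2⁻ᵈ s sᵀ` indexed by the sign vectors
`s ∈ {±1}ᵈ`. With `D_s = diag(s)` one has `C ⋆ E(s) = 2⁻ᵈ D_s C D_s`, so conjugating a joint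
observable `G(s, j)` by `D_s` and summing over `s` gives `C⁽ʲ⁾ = ∑ₛ D_s G(s, j) D_s`, which sums
to `C`; conjugation by `D_s` preserves diagonals, so `C⁽ʲ⁾` has the diagonal of `F(j)`. -/

namespace Matrix

variable {ι : Type*}

theorem hadamard_vecMulVec [Fintype ι] [DecidableEq ι] {α : Type*} [CommSemiring α]
    (C : Matrix ι ι α) (v w : ι → α) : C ⊙ vecMulVec v w = diagonal v * C * diagonal w := by
  ext n m
  simp only [hadamard_apply, vecMulVec_apply, mul_diagonal, diagonal_mul]
  ring

theorem sum_hadamard {κ α : Type*} [NonUnitalNonAssocSemiring α] (s : Finset κ)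
    (A : κ → Matrix ι ι α) (B : Matrix ι ι α) : (∑ k ∈ s, A k) ⊙ B = ∑ k ∈ s, A k ⊙ B := by
  ext n m
  simp only [hadamard_apply, sum_apply, Finset.sum_mul]

theorem hadamard_sum {κ α : Type*} [NonUnitalNonAssocSemiring α] (s : Finset κ)
    (A : Matrix ι ι α) (B : κ → Matrix ι ι α) : A ⊙ ∑ k ∈ s, B k = ∑ k ∈ s, A ⊙ B k := by
  ext n m
  simp only [hadamard_apply, sum_apply, Finset.mul_sum]

def signVec (s : ι → ℤˣ) : ι → ℂ := fun n => ((s n : ℤ) : ℂ)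

theorem signVec_mul_self (s : ι → ℤˣ) (n : ι) : signVec s n * signVec s n = 1 := by
  rw [signVec, ← Int.cast_mul, ← Units.val_mul, Int.units_mul_self, Units.val_one, Int.cast_one]

theorem star_signVec (s : ι → ℤˣ) : star (signVec s) = signVec s :=
  funext fun _ => star_intCast _

theorem sum_signVec_mul_signVec_of_ne [Fintype ι] [DecidableEq ι] {n m : ι} (h : n ≠ m) :
    ∑ s : ι → ℤˣ, signVec s n * signVec s m = 0 := by
  -- flipping the `n`-th sign permutes the summands and negates each of them
  let t : ι → ℤˣ := Pi.mulSingle n (-1)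
  have hflip : ∀ s, signVec (t * s) n * signVec (t * s) m = -(signVec s n * signVec s m) := by
    intro s
    simp [t, signVec, Pi.mulSingle_eq_of_ne' h]
  have := Equiv.sum_comp (Equiv.mulLeft t) fun s => signVec s n * signVec s m
  simp only [Equiv.coe_mulLeft, hflip, Finset.sum_neg_distrib] at this
  exact neg_eq_self.mp this

theorem diagonal_signVec_mul_self [Fintype ι] [DecidableEq ι] (s : ι → ℤˣ) :
    diagonal (signVec s) * diagonal (signVec s) = 1 := by
  rw [diagonal_mul_diagonal, ← diagonal_one]
  exact congrArg diagonal (funext (signVec_mul_self s))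

theorem diagonal_signVec_mul_mul_diagonal_signVec_apply_self [Fintype ι] [DecidableEq ι]
    (s : ι → ℤˣ) (A : Matrix ι ι ℂ) (n : ι) :
    (diagonal (signVec s) * A * diagonal (signVec s)) n n = A n n := by
  rw [mul_diagonal, diagonal_mul, mul_right_comm, signVec_mul_self, one_mul]

theorem sum_vecMulVec_signVec [Fintype ι] [DecidableEq ι] :
    ∑ s : ι → ℤˣ, vecMulVec (signVec s) (signVec s) = (2 ^ Fintype.card ι : ℂ) • 1 := by
  ext n m
  simp only [sum_apply, smul_apply, vecMulVec_apply]
  rcases eq_or_ne n m with rfl | h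
  · simp [signVec_mul_self, Fintype.card_units_int]
  · simp [sum_signVec_mul_signVec_of_ne h, h]

noncomputable def signObservable [Fintype ι] (s : ι → ℤˣ) : Matrix ι ι ℂ :=
  (2 ^ Fintype.card ι : ℂ)⁻¹ • vecMulVec (signVec s) (signVec s)

theorem posSemidef_signObservable [Fintype ι] (s : ι → ℤˣ) : (signObservable s).PosSemidef := by
  have h : (0 : ℂ) ≤ (2 ^ Fintype.card ι : ℂ)⁻¹ := by positivity
  have := (posSemidef_vecMulVec_self_star (signVec s)).smul h
  rwa [star_signVec] at this

theorem sum_signObservable [Fintype ι] [DecidableEq ι] :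
    ∑ s : ι → ℤˣ, signObservable s = 1 := by
  simp only [signObservable, ← Finset.smul_sum, sum_vecMulVec_signVec, smul_smul]
  rw [inv_mul_cancel₀ (by positivity), one_smul]

theorem diagonal_signVec_mul_hadamard_signObservable_mul [Fintype ι] [DecidableEq ι]
    (C : Matrix ι ι ℂ) (s : ι → ℤˣ) :
    diagonal (signVec s) * (C ⊙ signObservable s) * diagonal (signVec s) =
      (2 ^ Fintype.card ι : ℂ)⁻¹ • C := by
  rw [signObservable, hadamard_smul, hadamard_vecMulVec, Matrix.mul_smul, Matrix.smul_mul,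
    ← mul_assoc, ← mul_assoc, diagonal_signVec_mul_self, one_mul, mul_assoc,
    diagonal_signVec_mul_self, mul_one]

theorem sum_diagonal_signVec_mul_hadamard_signObservable_mul [Fintype ι] [DecidableEq ι]
    (C : Matrix ι ι ℂ) :
    ∑ s : ι → ℤˣ, diagonal (signVec s) * (C ⊙ signObservable s) * diagonal (signVec s) = C := by
  simp only [diagonal_signVec_mul_hadamard_signObservable_mul, Finset.sum_const,
    Finset.card_univ, Fintype.card_fun, Fintype.card_units_int, ← Nat.cast_smul_eq_nsmul ℂ,
    smul_smul, Nat.cast_pow, Nat.cast_ofNat]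
  rw [mul_inv_cancel₀ (by positivity), one_smul]

end Matrix

section Observables

variable {d : ℕ} {Ω₁ Ω₂ : Type*} [Fintype Ω₁] [Fintype Ω₂]

theorem isObservable_signObservable : IsObservable (signObservable : (Fin d → ℤˣ) → _) :=
  ⟨posSemidef_signObservable, sum_signObservable⟩

theorem exists_decomposition_of_jointlyMeasurable_hadamard_signObservable
    (C : Matrix (Fin d) (Fin d) ℂ) (F : Ω₂ → Matrix (Fin d) (Fin d) ℂ)
    (h : JointlyMeasurable (fun s => C ⊙ signObservable s) F) :
    ∃ C' : Ω₂ → Matrix (Fin d) (Fin d) ℂ,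
      (∀ j, (C' j).PosSemidef) ∧ ∑ j, C' j = C ∧ ∀ j n, C' j n n = F j n n := by
  obtain ⟨G, hG, hG_left, hG_right⟩ := h
  refine ⟨fun j => ∑ s, diagonal (signVec s) * G (s, j) * diagonal (signVec s), ?_, ?_, ?_⟩
  · refine fun j => posSemidef_sum _ fun s _ => ?_
    simpa only [diagonal_conjTranspose, star_signVec] using
      (hG (s, j)).mul_mul_conjTranspose_same (diagonal (signVec s))
  · simp only [Finset.sum_comm (γ := Ω₂), ← Matrix.sum_mul, ← Matrix.mul_sum, hG_left]
    exact sum_diagonal_signVec_mul_hadamard_signObservable_mul C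
  · intro j n
    simp only [← hG_right j, Matrix.sum_apply,
      diagonal_signVec_mul_mul_diagonal_signVec_apply_self]

theorem jointlyMeasurable_hadamard_of_decomposition [Nonempty Ω₁]
    (C : Matrix (Fin d) (Fin d) ℂ) (F : Ω₂ → Matrix (Fin d) (Fin d) ℂ)
    (hF : ∀ j, (F j).IsDiag) (C' : Ω₂ → Matrix (Fin d) (Fin d) ℂ)
    (hC' : ∀ j, (C' j).PosSemidef) (hC'_sum : ∑ j, C' j = C)
    (hC'_diag : ∀ j n, C' j n n = F j n n)
    (E : Ω₁ → Matrix (Fin d) (Fin d) ℂ) (hE : IsObservable E) :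
    JointlyMeasurable (fun i => C ⊙ E i) F := by
  refine ⟨fun p => C' p.2 ⊙ E p.1, fun p => (hC' p.2).hadamard (hE.1 p.1), fun i => ?_,
    fun j => ?_⟩
  · rw [← hC'_sum]
    exact (sum_hadamard _ C' (E i)).symm
  · dsimp only
    rw [← hadamard_sum, hE.2, hadamard_one, ← (hF j).diagonal_diag]
    exact congrArg diagonal (funext (hC'_diag j))

end Observables

theorem schur_channel_incompatibility_breaking_iff_general
    {d : ℕ} (C : Matrix (Fin d) (Fin d) ℂ)
    {Ω₂ : Type*} [Fintype Ω₂]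
    (F : Ω₂ → Matrix (Fin d) (Fin d) ℂ)
    (hFdiag : ∀ j, ∀ n m : Fin d, n ≠ m → F j n m = 0) :
    (∀ (Ω₁ : Type) (_ : Fintype Ω₁) (_ : Nonempty Ω₁)
        (E : Ω₁ → Matrix (Fin d) (Fin d) ℂ), IsObservable E →
        JointlyMeasurable (fun i => C.hadamard (E i)) F) ↔
    (∃ C' : Ω₂ → Matrix (Fin d) (Fin d) ℂ,
        (∀ j, (C' j).PosSemidef) ∧ ∑ j, C' j = C ∧ ∀ j n, C' j n n = F j n n) :=
  ⟨fun h => exists_decomposition_of_jointlyMeasurable_hadamard_signObservable C F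
      (h _ inferInstance inferInstance _ isObservable_signObservable),
    fun ⟨C', hC', hC'_sum, hC'_diag⟩ _ _ _ E hE =>
      jointlyMeasurable_hadamard_of_decomposition C F hFdiag C' hC' hC'_sum hC'_diag E hE⟩

/-- SDP characterisation for Schur channels. For a Schur channel
`Λ(A) = C ⋆ A` with `C` positive semidefinite of unit diagonal and a diagonal observable
`F`, the pair `(Λ∘E, F)` is jointly measurable for every observable `E` iff `C` decomposes
as a sum of positive semidefinite matrices `C⁽ʲ⁾` with diagonals `C⁽ʲ⁾_{nn} = F(j)_{nn}`. -/
theorem schur_channel_incompatibility_breaking_iff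
    {d : ℕ} (hd : 1 ≤ d) (C : Matrix (Fin d) (Fin d) ℂ)
    (hC : C.PosSemidef) (hCdiag : ∀ n, C n n = 1)
    {Ω₂ : Type*} [Fintype Ω₂] [Nonempty Ω₂]
    (F : Ω₂ → Matrix (Fin d) (Fin d) ℂ) (hF : IsObservable F)
    (hFdiag : ∀ j, ∀ n m : Fin d, n ≠ m → F j n m = 0) :
    (∀ (Ω₁ : Type) (_ : Fintype Ω₁) (_ : Nonempty Ω₁)
        (E : Ω₁ → Matrix (Fin d) (Fin d) ℂ), IsObservable E →
        JointlyMeasurable (fun i => C.hadamard (E i)) F) ↔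
    (∃ C' : Ω₂ → Matrix (Fin d) (Fin d) ℂ,
        (∀ j, (C' j).PosSemidef) ∧ ∑ j, C' j = C ∧ ∀ j n, C' j n n = F j n n) :=
  schur_channel_incompatibility_breaking_iff_general C F hFdiag
end

section
/- Let (σ_k)_{k∈K} be a finite family of density matrices in Matrix (Fin d) (Fin d) ℂ and let (R_k)_{k∈K} be a finite-outcome observable on ℂ^d (each R_k positive semidefinite, ∑_k R_k = 1). Define the map Λ(A) := ∑_k tr(σ_k A) R_k. Then for ANY pair of finite-outcome observables E and F on ℂ^d, the observables Λ∘E and Λ∘F are jointly measurable; a joint observable is G(i,j) := ∑_k tr(σ_k E(i)) tr(σ_k F(j)) R_k. -/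
/-
In the Heisenberg picture `Λ` is measure-and-prepare: measuring `Λ ∘ E` amounts to measuring `R`
and, on outcome `k`, drawing `i` with probability `tr(σₖ E(i))` (nonnegative as the trace of a
product of positive semidefinite matrices, and summing to `tr σₖ = 1`). Drawing `i` and `j`
independently given `k` yields `G`, whose marginals are then `Λ ∘ E` and `Λ ∘ F`.
-/

open Matrix BigOperators
open scoped ComplexOrder

open scoped MatrixOrder in
theorem Matrix.PosSemidef.trace_mul_nonneg {n 𝕜 : Type*} [Fintype n] [DecidableEq n] [RCLike 𝕜]
    {A B : Matrix n n 𝕜} (hA : A.PosSemidef) (hB : B.PosSemidef) : 0 ≤ (A * B).trace := by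
  set S := CFC.sqrt A
  have hS : Sᴴ = S := (CFC.sqrt_nonneg A).posSemidef.1.eq
  calc 0 ≤ (Sᴴ * B * S).trace := (hB.conjTranspose_mul_mul_same S).trace_nonneg
    _ = (S * S * B).trace := by rw [hS, trace_mul_cycle]
    _ = (A * B).trace := by rw [CFC.sqrt_mul_sqrt_self A hA.nonneg]

theorem Matrix.posSemidef_sum_smul {n ι 𝕜 : Type*} [Fintype n] [RCLike 𝕜] (s : Finset ι)
    {c : ι → 𝕜} {R : ι → Matrix n n 𝕜} (hc : ∀ k ∈ s, 0 ≤ c k) (hR : ∀ k ∈ s, (R k).PosSemidef) :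
    (∑ k ∈ s, c k • R k).PosSemidef :=
  posSemidef_sum s fun k hk => (hR k hk).smul (hc k hk)

theorem IsObservable.sum_trace_mul {d : ℕ} {Ω : Type*} [Fintype Ω] [Nonempty Ω]
    {E : Ω → Matrix (Fin d) (Fin d) ℂ} (hE : IsObservable E) (σ : Matrix (Fin d) (Fin d) ℂ) :
    ∑ i, (σ * E i).trace = σ.trace := by
  rw [← trace_sum, ← Finset.mul_sum, hE.2, Matrix.mul_one]

theorem Finset.sum_sum_mul_smul_of_sum_eq_one {ι κ M : Type*} [Fintype ι] [Fintype κ]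
    [AddCommMonoid M] [Module ℂ M] (a : κ → ℂ) {b : ι → κ → ℂ} (hb : ∀ k, ∑ i, b i k = 1)
    (R : κ → M) : ∑ i, ∑ k, (a k * b i k) • R k = ∑ k, a k • R k := by
  rw [Finset.sum_comm]
  refine Finset.sum_congr rfl fun k _ => ?_
  rw [← Finset.sum_smul, ← Finset.mul_sum, hb, mul_one]

theorem entanglement_breaking_channel_is_incompatibility_breaking_general
    {d : ℕ} {K : Type*} [Fintype K] [Nonempty K]
    (σ : K → Matrix (Fin d) (Fin d) ℂ)
    (hσpos : ∀ k, (σ k).PosSemidef) (hσtr : ∀ k, (σ k).trace = 1)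
    (R : K → Matrix (Fin d) (Fin d) ℂ) (hR : IsObservable R)
    (Λ : Matrix (Fin d) (Fin d) ℂ → Matrix (Fin d) (Fin d) ℂ)
    (hΛ : ∀ A, Λ A = ∑ k, (Matrix.trace (σ k * A)) • R k)
    {Ω₁ Ω₂ : Type*} [Fintype Ω₁] [Fintype Ω₂] [Nonempty Ω₁] [Nonempty Ω₂]
    (E : Ω₁ → Matrix (Fin d) (Fin d) ℂ) (F : Ω₂ → Matrix (Fin d) (Fin d) ℂ)
    (hE : IsObservable E) (hF : IsObservable F) :
    (∀ i j, (∑ k, (Matrix.trace (σ k * E i) * Matrix.trace (σ k * F j)) • R k).PosSemidef) ∧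
    (∀ i, ∑ j, (∑ k, (Matrix.trace (σ k * E i) * Matrix.trace (σ k * F j)) • R k) = Λ (E i)) ∧
    (∀ j, ∑ i, (∑ k, (Matrix.trace (σ k * E i) * Matrix.trace (σ k * F j)) • R k) = Λ (F j)) ∧
    JointlyMeasurable (fun i => Λ (E i)) (fun j => Λ (F j)) := by
  have hEprob k : ∑ i, (σ k * E i).trace = 1 := by rw [hE.sum_trace_mul, hσtr]
  have hFprob k : ∑ j, (σ k * F j).trace = 1 := by rw [hF.sum_trace_mul, hσtr]
  have hpsd i j :
      (∑ k, (Matrix.trace (σ k * E i) * Matrix.trace (σ k * F j)) • R k).PosSemidef :=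
    posSemidef_sum_smul _
      (fun k _ => mul_nonneg ((hσpos k).trace_mul_nonneg (hE.1 i))
        ((hσpos k).trace_mul_nonneg (hF.1 j)))
      (fun k _ => hR.1 k)
  have hmargE i :
      ∑ j, (∑ k, (Matrix.trace (σ k * E i) * Matrix.trace (σ k * F j)) • R k) = Λ (E i) := by
    rw [hΛ, Finset.sum_sum_mul_smul_of_sum_eq_one _ hFprob]
  have hmargF j :
      ∑ i, (∑ k, (Matrix.trace (σ k * E i) * Matrix.trace (σ k * F j)) • R k) = Λ (F j) := by
    simp_rw [mul_comm (Matrix.trace (σ _ * E _))]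
    rw [hΛ, Finset.sum_sum_mul_smul_of_sum_eq_one _ hEprob]
  exact ⟨hpsd, hmargE, hmargF,
    ⟨fun p => ∑ k, (Matrix.trace (σ k * E p.1) * Matrix.trace (σ k * F p.2)) • R k,
      fun p => hpsd p.1 p.2, hmargE, hmargF⟩⟩

/-- an entanglement-breaking (measure-and-prepare) channel
`Λ(A) = ∑ₖ tr(σₖ A) Rₖ` is incompatibility-breaking: for any pair of observables `E, F`,
the observables `Λ∘E` and `Λ∘F` are jointly measurable, with the explicit joint observable
`G(i,j) = ∑ₖ tr(σₖ E(i)) tr(σₖ F(j)) Rₖ`. -/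
theorem entanglement_breaking_channel_is_incompatibility_breaking
    {d : ℕ} (hd : 1 ≤ d) {K : Type*} [Fintype K] [Nonempty K]
    (σ : K → Matrix (Fin d) (Fin d) ℂ)
    (hσpos : ∀ k, (σ k).PosSemidef) (hσtr : ∀ k, (σ k).trace = 1)
    (R : K → Matrix (Fin d) (Fin d) ℂ) (hR : IsObservable R)
    (Λ : Matrix (Fin d) (Fin d) ℂ → Matrix (Fin d) (Fin d) ℂ)
    (hΛ : ∀ A, Λ A = ∑ k, (Matrix.trace (σ k * A)) • R k)
    {Ω₁ Ω₂ : Type*} [Fintype Ω₁] [Fintype Ω₂] [Nonempty Ω₁] [Nonempty Ω₂]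
    (E : Ω₁ → Matrix (Fin d) (Fin d) ℂ) (F : Ω₂ → Matrix (Fin d) (Fin d) ℂ)
    (hE : IsObservable E) (hF : IsObservable F) :
    (∀ i j, (∑ k, (Matrix.trace (σ k * E i) * Matrix.trace (σ k * F j)) • R k).PosSemidef) ∧
    (∀ i, ∑ j, (∑ k, (Matrix.trace (σ k * E i) * Matrix.trace (σ k * F j)) • R k) = Λ (E i)) ∧
    (∀ j, ∑ i, (∑ k, (Matrix.trace (σ k * E i) * Matrix.trace (σ k * F j)) • R k) = Λ (F j)) ∧
    JointlyMeasurable (fun i => Λ (E i)) (fun j => Λ (F j)) :=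
  entanglement_breaking_channel_is_incompatibility_breaking_general σ hσpos hσtr R hR Λ hΛ E F hE hF
end

section
/- Let I be a finite index type, h : I → ℝ, K ∈ ℕ, and u : Fin K → I → ℂ. Define, for n, m ∈ I, d_{nm} := i·(h(n) − h(m)) − (1/2)·∑_{l} (|u(l)(n)|² + |u(l)(m)|² − 2·conj(u(l)(n))·u(l)(m)). Then for every t ≥ 0, the matrix C(t) ∈ Matrix I I ℂ with entries C(t)_{nm} = exp(t · d_{nm}) is positive semidefinite and has unit diagonal (C(t)_{nn} = 1 for all n). -/
open Matrix BigOperators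
open scoped ComplexOrder

/-!
With `G` the Gram matrix `G n m = ∑ₗ conj (u l n) * u l m` of the vectors `(u l n)ₗ`, the exponent
splits as `t * D n m = conj (a n) + t * G n m + a m`. Hence `C(t)` is the congruence
`diag(exp a)ᴴ * (t • G).map exp * diag(exp a)`, and the entrywise exponential of a positive
semidefinite matrix is positive semidefinite: it is the sum of the series `∑ₖ (k!)⁻¹ • G^{⊙k}`,
whose terms are positive semidefinite by the Schur product theorem.
-/

namespace Matrix

variable {n : Type*} [Fintype n] {𝕜 : Type*} [RCLike 𝕜]

theorem PosSemidef.map_pow {A : Matrix n n 𝕜} (hA : A.PosSemidef) (k : ℕ) :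
    (A.map (· ^ k)).PosSemidef := by
  induction k with
  | zero =>
    simpa [vecMulVec, Matrix.map] using posSemidef_vecMulVec_self_star (fun _ : n => (1 : 𝕜))
  | succ k ih =>
    have : A.map (· ^ (k + 1)) = A.map (· ^ k) ⊙ A := by ext; simp [pow_succ]
    exact this ▸ ih.hadamard hA

theorem PosSemidef.of_hasSum {ι : Type*} {f : ι → Matrix n n 𝕜} {A : Matrix n n 𝕜}
    (hf : HasSum f A) (hpos : ∀ i, (f i).PosSemidef) : A.PosSemidef := by
  have hherm : A.IsHermitian := by
    refine (hf.unique ?_).symm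
    simpa only [(hpos _).isHermitian.eq] using hf.matrix_conjTranspose
  refine .of_dotProduct_mulVec_nonneg hherm fun x => ?_
  let quadForm : Matrix n n 𝕜 →+ 𝕜 :=
    { toFun := fun M => star x ⬝ᵥ M *ᵥ x
      map_zero' := by simp
      map_add' := fun M N => by simp [add_mulVec, dotProduct_add] }
  have hcont : Continuous quadForm :=
    continuous_const.dotProduct (continuous_id.matrix_mulVec continuous_const)
  exact (hf.map quadForm hcont).nonneg fun i => (hpos i).dotProduct_mulVec_nonneg x

theorem PosSemidef.map_exp {A : Matrix n n ℂ} (hA : A.PosSemidef) :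
    (A.map Complex.exp).PosSemidef := by
  have hsum : HasSum (fun k : ℕ => ((k.factorial : ℂ)⁻¹) • A.map (· ^ k)) (A.map Complex.exp) := by
    refine Pi.hasSum.2 fun i => Pi.hasSum.2 fun j => ?_
    simpa [Complex.exp_eq_exp_ℂ] using NormedSpace.exp_series_hasSum_exp' (𝕂 := ℂ) (A i j)
  refine .of_hasSum hsum fun k => (hA.map_pow k).smul ?_
  positivity

theorem PosSemidef.of_exp_add_add {G : Matrix n n ℂ} (hG : G.PosSemidef) (a : n → ℂ) :
    (of fun i j => Complex.exp (star (a i) + G i j + a j)).PosSemidef := by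
  classical
  have hB := hG.map_exp.conjTranspose_mul_mul_same (diagonal fun i => Complex.exp (a i))
  convert hB using 1
  ext i j
  simp [diagonal_conjTranspose, mul_diagonal, diagonal_mul, Complex.exp_add, ← Complex.exp_conj]

end Matrix

theorem pure_decoherence_multiplier_posSemidef_general
    {I : Type*} [Fintype I] (h : I → ℝ) (K : ℕ) (u : Fin K → I → ℂ)
    (D : I → I → ℂ)
    (hD : ∀ n m, D n m =
      Complex.I * ((h n : ℂ) - (h m : ℂ)) -
        (1 / 2) * ∑ l, ((‖u l n‖ ^ 2 : ℂ) + (‖u l m‖ ^ 2 : ℂ)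
          - 2 * (starRingEnd ℂ) (u l n) * u l m))
    (t : ℝ) (ht : 0 ≤ t) :
    (Matrix.of fun n m => Complex.exp ((t : ℂ) * D n m)).PosSemidef ∧
    (∀ n, Complex.exp ((t : ℂ) * D n n) = 1) := by
  let G : Matrix I I ℂ := (of u)ᴴ * of u
  let a : I → ℂ := fun n => -(t : ℂ) * (Complex.I * h n + (1 / 2) * ∑ l, (‖u l n‖ : ℂ) ^ 2)
  have hG : (t • G).PosSemidef := (posSemidef_conjTranspose_mul_self _).smul ht
  have hG_apply : ∀ n m, G n m = ∑ l, starRingEnd ℂ (u l n) * u l m := fun n m => by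
    simp [G, mul_apply]
  have hdecomp : ∀ n m, (t : ℂ) * D n m = star (a n) + (t • G) n m + a m := fun n m => by
    simp only [hD, a, Matrix.smul_apply, hG_apply, Finset.sum_add_distrib, Finset.sum_sub_distrib,
      mul_assoc, ← Finset.mul_sum]
    simp only [one_div, neg_mul, star_neg, star_mul', RCLike.star_def, Complex.conj_ofReal, star_add,
      Complex.conj_I, star_inv₀, star_ofNat, star_sum, star_pow, Complex.real_smul]
    ring
  have hdiag : ∀ n, D n n = 0 := fun n => by
    rw [hD, Finset.sum_eq_zero fun l _ => by rw [mul_assoc, Complex.conj_mul']; ring]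
    ring
  refine ⟨?_, fun n => by rw [hdiag, mul_zero, Complex.exp_zero]⟩
  simpa only [hdecomp] using hG.of_exp_add_add a

/-- the multiplier matrix `C(t)_{nm} = exp(t d_{nm})` of a pure-decoherence
Lindblad semigroup, where
`d_{nm} = i(hₙ − hₘ) − ½ ∑ₗ (|uₗ(n)|² + |uₗ(m)|² − 2 conj(uₗ(n)) uₗ(m))`,
is positive semidefinite with unit diagonal for all `t ≥ 0`. -/
theorem pure_decoherence_multiplier_posSemidef
    {I : Type*} [Fintype I] [DecidableEq I] (h : I → ℝ) (K : ℕ) (u : Fin K → I → ℂ)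
    (D : I → I → ℂ)
    (hD : ∀ n m, D n m =
      Complex.I * ((h n : ℂ) - (h m : ℂ)) -
        (1 / 2) * ∑ l, ((‖u l n‖ ^ 2 : ℂ) + (‖u l m‖ ^ 2 : ℂ)
          - 2 * (starRingEnd ℂ) (u l n) * u l m))
    (t : ℝ) (ht : 0 ≤ t) :
    (Matrix.of fun n m => Complex.exp ((t : ℂ) * D n m)).PosSemidef ∧
    (∀ n, Complex.exp ((t : ℂ) * D n n) = 1) :=
  pure_decoherence_multiplier_posSemidef_general h K u D hD t ht
end

section
/- Let C ∈ Matrix I I ℂ (I a finite type) satisfy C_{nn} = 1 for all n and |C_{nm}| < 1 for all n ≠ m. If A ∈ Matrix I I ℂ satisfies C ⋆ (Aᴴ A) = (C ⋆ A)ᴴ (C ⋆ A), where ⋆ is the entrywise (Schur/Hadamard) product and Aᴴ the conjugate transpose, then A is diagonal (A_{nm} = 0 for all n ≠ m). -/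
/-!
The `(m, m)` entry of the hypothesis compares the squared lengths of the `m`-th columns of `A`
and of `C ⋆ A`: `∑ₖ |A k m|² = ∑ₖ |C k m|² |A k m|²`. Since `|C k m| ≤ 1` for every `k`, each
term `(1 - |C k m|²) |A k m|²` of the difference is nonnegative, hence zero; for `k ≠ m` the
factor `1 - |C k m|²` is positive, so `A k m = 0`.
-/

open Matrix

theorem Finset.eq_zero_of_sum_mul_eq_sum {ι R : Type*} [Field R] [LinearOrder R]
    [IsStrictOrderedRing R] {s : Finset ι} {w x : ι → R} (hw : ∀ k ∈ s, w k ≤ 1)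
    (hx : ∀ k ∈ s, 0 ≤ x k) (hsum : ∑ k ∈ s, w k * x k = ∑ k ∈ s, x k) {n : ι} (hn : n ∈ s)
    (hwn : w n < 1) : x n = 0 := by
  have hdefect : ∑ k ∈ s, (1 - w k) * x k = 0 := by
    simp only [sub_mul, one_mul, Finset.sum_sub_distrib, hsum, sub_self]
  have hterm := (Finset.sum_eq_zero_iff_of_nonneg fun k hk =>
    mul_nonneg (sub_nonneg.2 (hw k hk)) (hx k hk)).1 hdefect n hn
  exact (mul_eq_zero.1 hterm).resolve_left (sub_pos.2 hwn).ne'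

theorem Matrix.conjTranspose_mul_self_apply_self {I 𝕜 : Type*} [Fintype I] [RCLike 𝕜]
    (A : Matrix I I 𝕜) (m : I) : (Aᴴ * A) m m = ((∑ k, ‖A k m‖ ^ 2 : ℝ) : 𝕜) := by
  simp only [mul_apply, conjTranspose_apply, RCLike.star_def, RCLike.conj_mul]
  push_cast
  rfl

/-- for a Schur multiplier with unit diagonal and strictly contractive
off-diagonal entries, any matrix `A` satisfying the decoherence-free condition
`C ⋆ (Aᴴ A) = (C ⋆ A)ᴴ (C ⋆ A)` must be diagonal. -/
theorem decoherence_free_algebra_diagonal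
    {I : Type*} [Fintype I] (C A : Matrix I I ℂ)
    (hCdiag : ∀ n, C n n = 1)
    (hCoff : ∀ n m, n ≠ m → ‖C n m‖ < 1)
    (hA : C.hadamard (Aᴴ * A) = (C.hadamard A)ᴴ * (C.hadamard A)) :
    ∀ n m, n ≠ m → A n m = 0 := by
  intro n m hnm
  have hcol : ∑ k, ‖C k m‖ ^ 2 * ‖A k m‖ ^ 2 = ∑ k, ‖A k m‖ ^ 2 := by
    have h := congrFun (congrFun hA m) m
    rw [hadamard_apply, hCdiag, one_mul, conjTranspose_mul_self_apply_self,
      conjTranspose_mul_self_apply_self] at h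
    simpa only [hadamard_apply, norm_mul, mul_pow, eq_comm] using (RCLike.ofReal_inj.1 h)
  have hCle : ∀ k ∈ Finset.univ, ‖C k m‖ ^ 2 ≤ 1 := fun k _ => by
    rcases eq_or_ne k m with rfl | hk
    · simp [hCdiag]
    · exact pow_le_one₀ (norm_nonneg _) (hCoff k m hk).le
  have hAnm := Finset.eq_zero_of_sum_mul_eq_sum hCle (fun k _ => by positivity) hcol
    (Finset.mem_univ n) (pow_lt_one₀ (norm_nonneg _) (hCoff n m hnm) two_ne_zero)
  simpa using hAnm
end

section
/- Let e₀, f₀ ∈ ℝ² and e_z, f_z ∈ ℝ with ‖e₀‖² + e_z² ≤ 1 and ‖f₀‖² + f_z² ≤ 1, and let x ∈ ℝ with 0 ≤ x ≤ 1. Then √(x‖e₀+f₀‖² + (e_z+f_z)²) + √(x‖e₀−f₀‖² + (e_z−f_z)²) ≤ 2 holds if and only if (e₀·f₀)²·x² − [‖e₀−f₀‖² + 2(e₀·f₀)(1 − e_z f_z)]·x + (1−e_z²)(1−f_z²) ≥ 0, where e₀·f₀ denotes the Euclidean inner product on ℝ². -/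
/-!
With `A = x‖e₀ + f₀‖² + (e_z + f_z)²` and `B = x‖e₀ - f₀‖² + (e_z - f_z)²`, squaring twice
turns `√A + √B ≤ 2` into `4AB ≤ (4 - A - B)²`, which is legitimate because
`A + B ≤ 4`: by the parallelogram law `A + B = 2x(‖e₀‖² + ‖f₀‖²) + 2(e_z² + f_z²)`, and the two
Bloch vectors have length at most one. Expanding `‖e₀ ± f₀‖²` through the inner product, the
difference `(4 - A - B)² - 4AB` is exactly sixteen times the quadratic in `x`.
-/

open scoped RealInnerProductSpace

theorem Real.sqrt_add_sqrt_le_iff {A B c : ℝ} (hA : 0 ≤ A) (hB : 0 ≤ B) (hc : 0 ≤ c)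
    (hABc : A + B ≤ c ^ 2) :
    √A + √B ≤ c ↔ 4 * (A * B) ≤ (c ^ 2 - A - B) ^ 2 := by
  calc √A + √B ≤ c ↔ (√A + √B) ^ 2 ≤ c ^ 2 :=
        (pow_le_pow_iff_left₀ (by positivity) hc two_ne_zero).symm
    _ ↔ 2 * √(A * B) ≤ c ^ 2 - A - B := by
        rw [add_sq, Real.sq_sqrt hA, Real.sq_sqrt hB, mul_assoc, ← Real.sqrt_mul hA]
        constructor <;> intro h <;> linarith
    _ ↔ (2 * √(A * B)) ^ 2 ≤ (c ^ 2 - A - B) ^ 2 :=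
        (pow_le_pow_iff_left₀ (by positivity) (by linarith) two_ne_zero).symm
    _ ↔ 4 * (A * B) ≤ (c ^ 2 - A - B) ^ 2 := by
        rw [mul_pow, Real.sq_sqrt (mul_nonneg hA hB)]
        norm_num

section Dephasing

variable {E : Type*} [NormedAddCommGroup E] [InnerProductSpace ℝ E]

theorem dephased_norm_sq_add_le_four {e f : E} {ez fz x : ℝ}
    (he : ‖e‖ ^ 2 + ez ^ 2 ≤ 1) (hf : ‖f‖ ^ 2 + fz ^ 2 ≤ 1) (hx1 : x ≤ 1) :
    (x * ‖e + f‖ ^ 2 + (ez + fz) ^ 2) + (x * ‖e - f‖ ^ 2 + (ez - fz) ^ 2) ≤ 4 := by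
  have parallelogram : ‖e + f‖ ^ 2 + ‖e - f‖ ^ 2 = 2 * (‖e‖ ^ 2 + ‖f‖ ^ 2) := by
    rw [norm_add_sq_real, norm_sub_sq_real]; ring
  have hx : x * (‖e‖ ^ 2 + ‖f‖ ^ 2) ≤ ‖e‖ ^ 2 + ‖f‖ ^ 2 :=
    mul_le_of_le_one_left (by positivity) hx1
  nlinarith

theorem dephased_discriminant_eq (e f : E) (ez fz x : ℝ) :
    (2 ^ 2 - (x * ‖e + f‖ ^ 2 + (ez + fz) ^ 2) - (x * ‖e - f‖ ^ 2 + (ez - fz) ^ 2)) ^ 2 -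
        4 * ((x * ‖e + f‖ ^ 2 + (ez + fz) ^ 2) * (x * ‖e - f‖ ^ 2 + (ez - fz) ^ 2)) =
      16 * (⟪e, f⟫ ^ 2 * x ^ 2 - (‖e - f‖ ^ 2 + 2 * ⟪e, f⟫ * (1 - ez * fz)) * x +
        (1 - ez ^ 2) * (1 - fz ^ 2)) := by
  rw [norm_add_sq_real, norm_sub_sq_real]
  ring

end Dephasing

/-- the algebraic form of the joint-measurability criterion for two unbiased
qubit observables under dephasing: for Bloch data `(e₀, e_z)`, `(f₀, f_z)` and damping
parameter `x ∈ [0,1]`, the inequality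
`√(x‖e₀+f₀‖² + (e_z+f_z)²) + √(x‖e₀−f₀‖² + (e_z−f_z)²) ≤ 2` holds iff the quadratic
`(e₀·f₀)² x² − [‖e₀−f₀‖² + 2(e₀·f₀)(1−e_z f_z)] x + (1−e_z²)(1−f_z²)` is nonnegative. -/
theorem dephasing_jointMeasurability_quadratic_criterion
    (e₀ f₀ : EuclideanSpace ℝ (Fin 2)) (ez fz : ℝ)
    (he : ‖e₀‖ ^ 2 + ez ^ 2 ≤ 1) (hf : ‖f₀‖ ^ 2 + fz ^ 2 ≤ 1)
    (x : ℝ) (hx0 : 0 ≤ x) (hx1 : x ≤ 1) :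
    Real.sqrt (x * ‖e₀ + f₀‖ ^ 2 + (ez + fz) ^ 2) +
        Real.sqrt (x * ‖e₀ - f₀‖ ^ 2 + (ez - fz) ^ 2) ≤ 2 ↔
      ⟪e₀, f₀⟫ ^ 2 * x ^ 2 -
          (‖e₀ - f₀‖ ^ 2 + 2 * ⟪e₀, f₀⟫ * (1 - ez * fz)) * x +
          (1 - ez ^ 2) * (1 - fz ^ 2) ≥ 0 := by
  have hsum := dephased_norm_sq_add_le_four he hf hx1
  rw [Real.sqrt_add_sqrt_le_iff (by positivity) (by positivity) zero_le_two (by linarith),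
    ← sub_nonneg, dephased_discriminant_eq]
  constructor <;> intro h <;> linarith
end

section
/- Let N ≥ 1, let q : Fin (N+1) → ℝ be a probability vector (q_k ≥ 0, ∑_k q_k = 1), and let α ∈ [0,1]. For k ∈ Fin (N+1) define the probability vector p^{(k)} by p^{(k)}(j) = α·(if j = k then 1 else 0) + (1−α)·q_j, and set u_k(α) := √(q_k (1−α)(α + (1−α) q_k)) − q_k(1−α). Then for all k ≠ k' in Fin (N+1), the squared Hellinger distance satisfies 1 − ∑_j √(p^{(k)}(j) · p^{(k')}(j)) = α − u_k(α) − u_{k'}(α). -/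
open BigOperators

/-!
Write `p^{(k)} = α δ_k + c` with `c = (1 − α) q ≥ 0`. For `k ≠ k'` the product
`p^{(k)}(j) p^{(k')}(j)` is `c_j²` except at `j = k` and `j = k'`, where it is
`c_j (α + c_j)`. So the Hellinger affinity is `∑ c = 1 − α` corrected at these two
coordinates by `√(c_j (α + c_j)) − c_j`, which is exactly `u_j(α)`.
-/

section HellingerAffinity

variable {ι : Type*} [DecidableEq ι] {c : ι → ℝ} {k k' : ι}

theorem sqrt_mul_add_indicator_of_ne (hc : ∀ j, 0 ≤ c j) (a : ℝ) (hkk' : k ≠ k') (j : ι) :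
    √((a * (if j = k then 1 else 0) + c j) * (a * (if j = k' then 1 else 0) + c j)) =
      c j + (if j = k then √(c k * (a + c k)) - c k else 0) +
        (if j = k' then √(c k' * (a + c k')) - c k' else 0) := by
  by_cases hjk : j = k
  · subst hjk
    simp only [↓reduceIte, if_neg hkk']
    rw [show (a * 1 + c j) * (a * 0 + c j) = c j * (a + c j) by ring]
    ring
  by_cases hjk' : j = k'
  · subst hjk'
    simp only [↓reduceIte, if_neg hjk]
    rw [show (a * 0 + c j) * (a * 1 + c j) = c j * (a + c j) by ring]
    ring
  · simp only [if_neg hjk, if_neg hjk', mul_zero, zero_add, add_zero]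
    exact Real.sqrt_mul_self (hc j)

theorem sum_sqrt_mul_add_indicator_of_ne [Fintype ι] (hc : ∀ j, 0 ≤ c j) (a : ℝ)
    (hkk' : k ≠ k') :
    ∑ j, √((a * (if j = k then 1 else 0) + c j) * (a * (if j = k' then 1 else 0) + c j)) =
      ∑ j, c j + (√(c k * (a + c k)) - c k) + (√(c k' * (a + c k')) - c k') := by
  simp only [sqrt_mul_add_indicator_of_ne hc a hkk', Finset.sum_add_distrib,
    Finset.sum_ite_eq', Finset.mem_univ, if_true]

end HellingerAffinity

theorem hellinger_distance_interpolated_observable_general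
    {N : ℕ} (q : Fin (N + 1) → ℝ)
    (hq0 : ∀ k, 0 ≤ q k) (hq1 : ∑ k, q k = 1)
    (α : ℝ) (hα1 : α ≤ 1)
    (p : Fin (N + 1) → Fin (N + 1) → ℝ)
    (hp : ∀ k j, p k j = α * (if j = k then 1 else 0) + (1 - α) * q j)
    (u : Fin (N + 1) → ℝ)
    (hu : ∀ k, u k = Real.sqrt (q k * (1 - α) * (α + (1 - α) * q k)) - q k * (1 - α)) :
    ∀ k k' : Fin (N + 1), k ≠ k' →
      1 - ∑ j, Real.sqrt (p k j * p k' j) = α - u k - u k' := by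
  intro k k' hkk'
  have hc : ∀ j, 0 ≤ (1 - α) * q j := fun j => mul_nonneg (by linarith) (hq0 j)
  have hu' : ∀ k, u k = √((1 - α) * q k * (α + (1 - α) * q k)) - (1 - α) * q k := by
    intro k
    rw [hu, mul_comm (1 - α)]
  have hsum : ∑ j, (1 - α) * q j = 1 - α := by rw [← Finset.mul_sum, hq1, mul_one]
  simp only [hp, sum_sqrt_mul_add_indicator_of_ne hc α hkk', hsum, ← hu']
  ring

/-- the squared Hellinger distance between the outcome distributions
`p^{(k)} = α δ_k + (1−α) q` of the interpolated observable `F_α` satisfies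
`d²(p^{(k)}, p^{(k')}) = α − u_k(α) − u_{k'}(α)` for `k ≠ k'`, where
`u_k(α) = √(q_k(1−α)(α+(1−α)q_k)) − q_k(1−α)`. -/
theorem hellinger_distance_interpolated_observable
    {N : ℕ} (hN : 1 ≤ N) (q : Fin (N + 1) → ℝ)
    (hq0 : ∀ k, 0 ≤ q k) (hq1 : ∑ k, q k = 1)
    (α : ℝ) (hα0 : 0 ≤ α) (hα1 : α ≤ 1)
    (p : Fin (N + 1) → Fin (N + 1) → ℝ)
    (hp : ∀ k j, p k j = α * (if j = k then 1 else 0) + (1 - α) * q j)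
    (u : Fin (N + 1) → ℝ)
    (hu : ∀ k, u k = Real.sqrt (q k * (1 - α) * (α + (1 - α) * q k)) - q k * (1 - α)) :
    ∀ k k' : Fin (N + 1), k ≠ k' →
      1 - ∑ j, Real.sqrt (p k j * p k' j) = α - u k - u k' :=
  hellinger_distance_interpolated_observable_general q hq0 hq1 α hα1 p hp u hu
end
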